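/- arXiv:math/0104178 — 2 statements merged into one kernel-verified Lean document; each statement's English description precedes it below -/
import Mathlib

section
/- Assume the local setting. Then for every integer n ≥ 0, |[n]_q!|_v = |[κ_v]_q|_v^{⌊n/κ_v⌋} · |⌊n/κ_v⌋!|_v, where ⌊·⌋ is the integer part and ⌊n/κ_v⌋! is the ordinary factorial viewed in K_v. Moreover, for all integers n ≥ i ≥ 0, the Gaussian binomial coefficient satisfies |binom(n,i)_q|_v ≤ 1. -/
open Filter
open scoped ENNReal

noncomputable section

variable {Kv : Type*} [NormedField Kv]

/-- `[n]_q = 1 + q + ⋯ + q^{n-1}`. -/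
def qNat (q : Kv) (n : ℕ) : Kv := ∑ i ∈ Finset.range n, q ^ i

/-- `[n]_q! = [1]_q ⋯ [n]_q`. -/
def qFactorial (q : Kv) : ℕ → Kv
  | 0 => 1
  | n + 1 => qFactorial q n * qNat q (n + 1)

/-- The Gaussian binomial coefficient `binom(n,i)_q`. -/
def qBinom (q : Kv) (n i : ℕ) : Kv := qFactorial q n / (qFactorial q i * qFactorial q (n - i))

/-- The substitution `x ↦ qx` on rational functions. -/
def ratSubst (q : Kv) (f : RatFunc Kv) : RatFunc Kv :=
  algebraMap (Polynomial Kv) (RatFunc Kv) (f.num.comp (Polynomial.C q * Polynomial.X)) /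
    algebraMap (Polynomial Kv) (RatFunc Kv) (f.denom.comp (Polynomial.C q * Polynomial.X))

/-- The `q`-difference operator `d_q f(x) = (f(qx) - f(x))/((q-1)x)`. -/
def qDeriv (q : Kv) (f : RatFunc Kv) : RatFunc Kv :=
  (ratSubst q f - f) / (RatFunc.C (q - 1) * RatFunc.X)

/-- The Gauss norm of a polynomial: the sup of the norms of its coefficients. -/
def polyGaussNorm (P : Polynomial Kv) : ℝ := ⨆ i : ℕ, ‖P.coeff i‖

/-- The Gauss norm of a rational function. -/
def gaussNorm (f : RatFunc Kv) : ℝ := polyGaussNorm f.num / polyGaussNorm f.denom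

/-- The Gauss norm of a matrix of rational functions: max of the Gauss norms of the entries. -/
def matGaussNorm {μ : ℕ} (M : Matrix (Fin μ) (Fin μ) (RatFunc Kv)) : ℝ :=
  ⨆ i, ⨆ j, gaussNorm (M i j)

/-- The sequence of matrices `G_n`: `G_0 = 1`, `G_{n+1}(x) = G(x)·G_n(qx) + (d_q G_n)(x)`. -/
def Gseq {μ : ℕ} (q : Kv) (G : Matrix (Fin μ) (Fin μ) (RatFunc Kv)) :
    ℕ → Matrix (Fin μ) (Fin μ) (RatFunc Kv)
  | 0 => 1
  | n + 1 => G * (Gseq q G n).map (ratSubst q) + (Gseq q G n).map (qDeriv q)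

/-- `χ_v = min(1, liminf |G_n/[n]_q!|^{-1/n})`, computed in `ℝ≥0∞`. -/
def chiV {μ : ℕ} (q : Kv) (G : Matrix (Fin μ) (Fin μ) (RatFunc Kv)) : ℝ≥0∞ :=
  min 1 (Filter.liminf (fun n : ℕ =>
    (ENNReal.ofReal (matGaussNorm (Gseq q G n) / ‖qFactorial q n‖)) ^ (-(1 / (n : ℝ))))
    Filter.atTop)

/-! Write `ε = q ^ κ - 1`. Then `[κ s]_q = [κ]_q [s]_{q^κ}` and
`[s]_{1+ε} = ∑_{k<s} C(s, k+1) ε ^ k`, in which the term `s` (at `k = 0`) strictly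
dominates: `(k + 1) C(s, k + 1) = s C(s - 1, k)` gives `|C(s, k + 1)| ≤ |s| / |k + 1|`, and
Legendre's bound `(p - 1) v_p(k + 1) ≤ k` turns the hypothesis on `|ε|` into
`|ε| ^ k < |k + 1|`. Hence `|[κ s]_q| = |s| |[κ]_q|`. If `κ ∤ m` then `|1 - q ^ m| = 1`, since
`|1 - q ^ m| < 1` would pass to the remainder of `m` modulo `κ`; hence `|[m]_q| = 1`.
Multiplying over `m ≤ n` gives the factorial formula, and the binomial bound follows from
`⌊i/κ⌋ + ⌊(n-i)/κ⌋ ≤ ⌊n/κ⌋` and `⌊i/κ⌋! ⌊(n-i)/κ⌋! ∣ ⌊n/κ⌋!`. -/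

theorem Nat.sub_one_mul_factorization_lt {p n : ℕ} (hp : p.Prime) (hn : n ≠ 0) :
    (p - 1) * n.factorization p < n := by
  have : Fact p.Prime := ⟨hp⟩
  calc (p - 1) * n.factorization p ≤ (p - 1) * n.factorial.factorization p := by
        gcongr
        exact (Nat.factorization_le_iff_dvd hn n.factorial_ne_zero).2 (Nat.dvd_factorial
          (Nat.pos_of_ne_zero hn) le_rfl) p
    _ < n := by
        rw [Nat.factorization_def _ hp]
        exact sub_one_mul_padicValNat_factorial_lt_of_ne_zero p hn

theorem one_add_pow_sub_one {R : Type*} [CommRing R] (x : R) (n : ℕ) :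
    (1 + x) ^ n - 1 = x * ∑ k ∈ Finset.range n, x ^ k * (n.choose (k + 1) : R) := by
  rw [add_comm, add_pow, Finset.sum_range_succ', Finset.mul_sum]
  simp only [one_pow, mul_one, pow_zero, Nat.choose_zero_right, Nat.cast_one, add_sub_cancel_right,
    pow_succ, mul_assoc, mul_left_comm x]

theorem qNat_mul (q : Kv) (a b : ℕ) : qNat q (a * b) = qNat q a * qNat (q ^ a) b := by
  induction b with
  | zero => simp [qNat]
  | succ b ih =>
    simp only [qNat] at ih ⊢
    rw [Nat.mul_succ, Finset.sum_range_add, ih, Finset.sum_range_succ _ b, mul_add, ← pow_mul,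
      Finset.sum_mul _ _ (q ^ (a * b))]
    simp only [pow_add, mul_comm]

theorem norm_qFactorial_eq {q : Kv} {κ : ℕ} (hndvd : ∀ m, ¬ κ ∣ m → ‖qNat q m‖ = 1)
    (hdvd : ∀ s, ‖qNat q (κ * s)‖ = ‖(s : Kv)‖ * ‖qNat q κ‖) (n : ℕ) :
    ‖qFactorial q n‖ = ‖qNat q κ‖ ^ (n / κ) * ‖((n / κ).factorial : Kv)‖ := by
  induction n with
  | zero => simp [qFactorial]
  | succ n ih =>
    have hdiv := Nat.succ_div (a := n) (b := κ)
    rw [qFactorial, norm_mul, ih, hdiv]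
    split_ifs at hdiv ⊢ with h
    · rw [← Nat.mul_div_cancel' h, hdiv, hdvd, Nat.factorial_succ, Nat.cast_mul, norm_mul,
        pow_succ]
      ring
    · rw [hndvd _ h, add_zero, mul_one]

section Ultrametric

variable [IsUltrametricDist Kv] {p : ℕ} {r : ℝ} {q : Kv}

theorem norm_natCast_eq_one_of_coprime {n : ℕ} (hpv : ‖(p : Kv)‖ < 1) (hn : n.Coprime p) :
    ‖(n : Kv)‖ = 1 := by
  refine le_antisymm (IsUltrametricDist.norm_natCast_le_one Kv n) (not_lt.1 fun hlt => ?_)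
  obtain ⟨a, b, hab⟩ := Nat.isCoprime_iff_coprime.2 hn
  have hsmall (z : ℤ) (m : ℕ) (hm : ‖(m : Kv)‖ < 1) : ‖(z : Kv) * m‖ < 1 := by
    rw [norm_mul]
    exact mul_lt_one_of_nonneg_of_lt_one_right (IsUltrametricDist.norm_intCast_le_one Kv z)
      (norm_nonneg _) hm
  have h1 : (a : Kv) * n + b * p = 1 := by exact_mod_cast congrArg (Int.cast : ℤ → Kv) hab
  have := (IsUltrametricDist.norm_add_le_max ((a : Kv) * n) (b * p)).trans_lt
    (max_lt (hsmall a n hlt) (hsmall b p hpv))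
  rw [h1, norm_one] at this
  exact this.false

theorem norm_natCast_eq_pow_factorization {n : ℕ} (hp : p.Prime) (hpv : ‖(p : Kv)‖ < 1)
    (hn : n ≠ 0) : ‖(n : Kv)‖ = ‖(p : Kv)‖ ^ n.factorization p := by
  conv_lhs => rw [← Nat.ordProj_mul_ordCompl_eq_self n p]
  rw [Nat.cast_mul, norm_mul, Nat.cast_pow, norm_pow,
    norm_natCast_eq_one_of_coprime hpv (Nat.coprime_ordCompl hp hn).symm, mul_one]

theorem norm_natCast_le_of_dvd {a b : ℕ} (h : a ∣ b) :
    ‖(b : Kv)‖ ≤ ‖(a : Kv)‖ := by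
  obtain ⟨c, rfl⟩ := h
  rw [Nat.cast_mul, norm_mul]
  exact mul_le_of_le_one_right (norm_nonneg _) (IsUltrametricDist.norm_natCast_le_one Kv c)

theorem pow_le_norm_natCast_succ (hp : p.Prime) (hpv : ‖(p : Kv)‖ < 1) (hr : 0 ≤ r)
    (hrp : r ^ (p - 1) ≤ ‖(p : Kv)‖) (n : ℕ) : r ^ n ≤ ‖((n + 1 : ℕ) : Kv)‖ := by
  have hr1 : r ≤ 1 :=
    (pow_le_one_iff_of_nonneg hr (by have := hp.two_le; omega)).1 (hrp.trans hpv.le)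
  rw [norm_natCast_eq_pow_factorization hp hpv n.succ_ne_zero]
  calc r ^ n ≤ r ^ ((p - 1) * (n + 1).factorization p) :=
        pow_le_pow_of_le_one hr hr1
          (Nat.lt_succ_iff.1 (Nat.sub_one_mul_factorization_lt hp n.succ_ne_zero))
    _ ≤ ‖(p : Kv)‖ ^ (n + 1).factorization p := by
        rw [pow_mul]
        exact pow_le_pow_left₀ (pow_nonneg hr _) hrp _

theorem norm_pow_mul_choose_lt (hp : p.Prime) (hpv : ‖(p : Kv)‖ < 1)
    (hrp : r ^ (p - 1) ≤ ‖(p : Kv)‖) {x : Kv} (hx : ‖x‖ < r) (t k : ℕ) :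
    ‖x ^ (k + 1) * ((t + 1).choose (k + 2) : Kv)‖ < ‖((t + 1 : ℕ) : Kv)‖ := by
  have hr : 0 ≤ r := (norm_nonneg x).trans hx.le
  have hk : r ^ (k + 1) ≤ ‖((k + 2 : ℕ) : Kv)‖ := pow_le_norm_natCast_succ hp hpv hr hrp (k + 1)
  have hk0 : 0 < ‖((k + 2 : ℕ) : Kv)‖ :=
    (pow_pos ((norm_nonneg x).trans_lt hx) _).trans_le hk
  have ht0 : 0 < ‖((t + 1 : ℕ) : Kv)‖ :=
    (pow_pos ((norm_nonneg x).trans_lt hx) _).trans_le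
      (pow_le_norm_natCast_succ hp hpv hr hrp t)
  have hchoose :
      ‖((t + 1).choose (k + 2) : Kv)‖ * ‖((k + 2 : ℕ) : Kv)‖ ≤ ‖((t + 1 : ℕ) : Kv)‖ := by
    rw [← norm_mul, ← Nat.cast_mul, ← Nat.add_one_mul_choose_eq, Nat.cast_mul, norm_mul]
    exact mul_le_of_le_one_right (norm_nonneg _) (IsUltrametricDist.norm_natCast_le_one Kv _)
  have hpow : ‖x‖ ^ (k + 1) < ‖((k + 2 : ℕ) : Kv)‖ :=
    (pow_lt_pow_left₀ hx (norm_nonneg x) k.succ_ne_zero).trans_le hk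
  rw [norm_mul, norm_pow, ← mul_lt_mul_iff_of_pos_right hk0]
  calc ‖x‖ ^ (k + 1) * ‖((t + 1).choose (k + 2) : Kv)‖ * ‖((k + 2 : ℕ) : Kv)‖
      ≤ ‖x‖ ^ (k + 1) * ‖((t + 1 : ℕ) : Kv)‖ := by
        rw [mul_assoc]; exact mul_le_mul_of_nonneg_left hchoose (by positivity)
    _ < ‖((k + 2 : ℕ) : Kv)‖ * ‖((t + 1 : ℕ) : Kv)‖ := mul_lt_mul_of_pos_right hpow ht0
    _ = _ := mul_comm _ _

theorem norm_qNat_eq_norm_natCast (hp : p.Prime) (hpv : ‖(p : Kv)‖ < 1)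
    (hrp : r ^ (p - 1) ≤ ‖(p : Kv)‖) {Q : Kv} (hQ : ‖Q - 1‖ < r) (s : ℕ) :
    ‖qNat Q s‖ = ‖(s : Kv)‖ := by
  rcases eq_or_ne Q 1 with rfl | hQ1
  · simp [qNat]
  have hsum : qNat Q s = ∑ k ∈ Finset.range s, (Q - 1) ^ k * (s.choose (k + 1) : Kv) := by
    refine mul_left_cancel₀ (sub_ne_zero.2 hQ1) ?_
    rw [← one_add_pow_sub_one, add_sub_cancel, mul_comm]
    exact geom_sum_mul Q s
  rw [hsum]
  rcases s with _ | t
  · simp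
  rw [Finset.sum_range_succ']
  obtain ⟨i, -, hi⟩ := IsUltrametricDist.exists_norm_finsetSum_le (Finset.range t)
    fun k => (Q - 1) ^ (k + 1) * ((t + 1).choose (k + 1 + 1) : Kv)
  have hlt := hi.trans_lt (norm_pow_mul_choose_lt hp hpv hrp hQ t i)
  rw [IsUltrametricDist.norm_add_eq_max_of_norm_ne_norm (by simpa using hlt.ne), max_eq_right]
  · simp
  · simpa using hlt.le

theorem norm_qNat_le_one (hq : ‖q‖ ≤ 1) (n : ℕ) : ‖qNat q n‖ ≤ 1 :=
  IsUltrametricDist.norm_sum_le_of_forall_le_of_nonneg zero_le_one fun i _ => by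
    rw [norm_pow]; exact pow_le_one₀ (norm_nonneg q) hq

theorem norm_one_sub_pow_mul_le (hq : ‖q‖ ≤ 1) (a b : ℕ) :
    ‖1 - q ^ (a * b)‖ ≤ ‖1 - q ^ a‖ := by
  rw [norm_sub_rev, pow_mul, ← geom_sum_mul, norm_mul, norm_sub_rev]
  refine mul_le_of_le_one_left (norm_nonneg _) (norm_qNat_le_one ?_ b)
  rw [norm_pow]
  exact pow_le_one₀ (norm_nonneg q) hq

theorem dvd_of_norm_one_sub_pow_lt_one (hq : ‖q‖ = 1) {κ : ℕ} (hκpos : 0 < κ)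
    (hκlt : ‖1 - q ^ κ‖ < 1) (hκmin : ∀ m : ℕ, 0 < m → ‖1 - q ^ m‖ < 1 → κ ≤ m) {m : ℕ}
    (hm : ‖1 - q ^ m‖ < 1) : κ ∣ m := by
  have hrem : ‖1 - q ^ (m % κ)‖ < 1 := by
    have hsplit :
        q ^ (κ * (m / κ)) * (1 - q ^ (m % κ)) = (1 - q ^ m) - (1 - q ^ (κ * (m / κ))) := by
      have hqm : q ^ m = q ^ (κ * (m / κ)) * q ^ (m % κ) := by
        rw [← pow_add, Nat.div_add_mod]
      rw [hqm]
      ring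
    have := congrArg norm hsplit
    rw [norm_mul, norm_pow, hq, one_pow, one_mul] at this
    rw [this, sub_eq_add_neg]
    refine (IsUltrametricDist.norm_add_le_max _ _).trans_lt (max_lt hm ?_)
    rw [norm_neg]
    exact (norm_one_sub_pow_mul_le hq.le κ _).trans_lt hκlt
  by_contra h
  have := hκmin _ (Nat.pos_of_ne_zero (mt Nat.dvd_of_mod_eq_zero h)) hrem
  exact absurd (Nat.mod_lt m hκpos) this.not_gt

theorem norm_qNat_eq_one_of_not_dvd (hq : ‖q‖ = 1) {κ : ℕ} (hκpos : 0 < κ)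
    (hκlt : ‖1 - q ^ κ‖ < 1) (hκmin : ∀ m : ℕ, 0 < m → ‖1 - q ^ m‖ < 1 → κ ≤ m) {m : ℕ}
    (hm : ¬ κ ∣ m) : ‖qNat q m‖ = 1 := by
  have hnorm (n : ℕ) (hn : ¬ κ ∣ n) : ‖q ^ n - 1‖ = 1 := by
    rw [norm_sub_rev]
    refine le_antisymm ?_
      (not_lt.1 (mt (dvd_of_norm_one_sub_pow_lt_one hq hκpos hκlt hκmin) hn))
    simpa [sub_eq_add_neg, hq] using IsUltrametricDist.norm_add_le_max (1 : Kv) (-q ^ n)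
  have := congrArg norm (geom_sum_mul q m)
  rwa [norm_mul, hnorm m hm, ← pow_one q, hnorm 1 fun h => hm (h.trans (one_dvd m)), mul_one,
    pow_one] at this

theorem norm_qBinom_le_one {κ : ℕ}
    (hfact : ∀ n, ‖qFactorial q n‖ = ‖qNat q κ‖ ^ (n / κ) * ‖((n / κ).factorial : Kv)‖)
    (hκ : ‖qNat q κ‖ ≤ 1) {n i : ℕ} (hi : i ≤ n) : ‖qBinom q n i‖ ≤ 1 := by
  have hle : i / κ + (n - i) / κ ≤ n / κ := by
    simpa [Nat.add_sub_cancel' hi] using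
      Nat.div_add_div_le_add_div (x := i) (y := n - i) (z := κ)
  have hdvd : (i / κ).factorial * ((n - i) / κ).factorial ∣ (n / κ).factorial :=
    (Nat.factorial_mul_factorial_dvd_factorial_add _ _).trans (Nat.factorial_dvd_factorial hle)
  rw [qBinom, norm_div]
  refine div_le_one_of_le₀ ?_ (norm_nonneg _)
  rw [norm_mul, hfact, hfact, hfact]
  calc ‖qNat q κ‖ ^ (n / κ) * ‖((n / κ).factorial : Kv)‖
      ≤ ‖qNat q κ‖ ^ (i / κ + (n - i) / κ) *
          (‖((i / κ).factorial : Kv)‖ * ‖(((n - i) / κ).factorial : Kv)‖) := by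
        refine mul_le_mul (pow_le_pow_of_le_one (norm_nonneg _) hκ hle) ?_ (norm_nonneg _)
          (by positivity)
        simpa using norm_natCast_le_of_dvd (Kv := Kv) hdvd
    _ = _ := by ring

end Ultrametric

theorem q_factorial_binomial_estimates_general
    {Kv : Type*} [NontriviallyNormedField Kv]
    (hna : ∀ x y : Kv, ‖x + y‖ ≤ max ‖x‖ ‖y‖)
    (p : ℕ) (hp : Nat.Prime p) (hpv : ‖(p : Kv)‖ < 1)
    (q : Kv) (hq1 : ‖q‖ = 1)
    (κ : ℕ) (hκpos : 0 < κ) (hκlt : ‖1 - q ^ κ‖ < 1)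
    (hκmin : ∀ m : ℕ, 0 < m → ‖1 - q ^ m‖ < 1 → κ ≤ m)
    (hdw : ‖1 - q ^ κ‖ < ‖(p : Kv)‖ ^ ((1 : ℝ) / ((p : ℝ) - 1)))
    : (∀ n : ℕ, ‖qFactorial q n‖ = ‖qNat q κ‖ ^ (n / κ) * ‖((n / κ).factorial : Kv)‖) ∧
      (∀ n i : ℕ, i ≤ n → ‖qBinom q n i‖ ≤ 1) := by
  have : IsUltrametricDist Kv :=
    IsUltrametricDist.isUltrametricDist_of_forall_norm_add_le_max_norm hna
  have hrp : (‖(p : Kv)‖ ^ ((1 : ℝ) / ((p : ℝ) - 1))) ^ (p - 1) = ‖(p : Kv)‖ := by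
    rw [one_div, ← Nat.cast_pred hp.pos,
      Real.rpow_inv_natCast_pow (norm_nonneg _) (by have := hp.two_le; omega)]
  have hfact := norm_qFactorial_eq (q := q) (κ := κ)
    (fun m hm => norm_qNat_eq_one_of_not_dvd hq1 hκpos hκlt hκmin hm)
    (fun s => by
      rw [qNat_mul, norm_mul, mul_comm,
        norm_qNat_eq_norm_natCast hp hpv hrp.le (by rwa [norm_sub_rev]) s])
  exact ⟨hfact, fun n i hi => norm_qBinom_le_one hfact (norm_qNat_le_one hq1.le κ) hi⟩

/-- p-adic estimates of q-factorials and q-binomial coefficients. -/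
theorem q_factorial_binomial_estimates
    {Kv : Type*} [NontriviallyNormedField Kv] [CompleteSpace Kv]
    (hna : ∀ x y : Kv, ‖x + y‖ ≤ max ‖x‖ ‖y‖)
    (p : ℕ) (hp : Nat.Prime p) (hpv : ‖(p : Kv)‖ < 1)
    (q : Kv) (hq1 : ‖q‖ = 1) (hqru : ∀ m : ℕ, 0 < m → q ^ m ≠ 1)
    (κ : ℕ) (hκpos : 0 < κ) (hκlt : ‖1 - q ^ κ‖ < 1)
    (hκmin : ∀ m : ℕ, 0 < m → ‖1 - q ^ m‖ < 1 → κ ≤ m)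
    (hdw : ‖1 - q ^ κ‖ < ‖(p : Kv)‖ ^ ((1 : ℝ) / ((p : ℝ) - 1)))
    : (∀ n : ℕ, ‖qFactorial q n‖ = ‖qNat q κ‖ ^ (n / κ) * ‖((n / κ).factorial : Kv)‖) ∧
      (∀ n i : ℕ, i ≤ n → ‖qBinom q n i‖ ≤ 1) :=
  q_factorial_binomial_estimates_general hna p hp hpv q hq1 κ hκpos hκlt hκmin hdw
end
end

section
/- Assume the local setting. Let a ∈ K_v, let (a_n)_{n≥0} be a sequence in K_v, and let ρ be a real number with 0 < ρ ≤ 1. Suppose that max(ρ, |a|_v)^{1−1/κ_v} · max(ρ, |a|_v·|[κ_v]_q|_v)^{1/κ_v} < liminf_{n→∞} |a_n|_v^{−1/n}. Then for every x ∈ K_v with |x − a|_v < ρ, the series Σ_{n≥0} a_n·(x−a)(x−qa)⋯(x−q^{n−1}a) converges in K_v (its terms tend to 0, hence it is summable since K_v is complete and non-archimedean). -/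
open Filter
open scoped ENNReal

noncomputable section

variable {Kv : Type*} [NormedField Kv]

/-! Since `‖q‖ ≤ 1` and the norm is ultrametric, each factor `x - q ^ i * a = (x - a) + (1 - q ^ i) * a`
has norm at most `max ρ ‖a‖`, and when `κ ∣ i` the element `1 - q ^ i` is a multiple of
`1 - q ^ κ = [κ]_q (1 - q)`, so the factor has norm at most `max ρ (‖a‖ * ‖[κ]_q‖)`. At least `n / κ`
of the first `n` indices are multiples of `κ`, so the `n`-th product is bounded by `L ^ n`, where `L`
is the left side of the hypothesis. The coefficients are eventually bounded by `s⁻¹ ^ n` for any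
`L < s < liminf ‖a_n‖^(-1/n)`, and the series is dominated by a geometric series of ratio `L / s`. -/

open Finset

lemma prod_le_pow_mul_pow_of_subset {ι : Type*} {s t : Finset ι} (hts : t ⊆ s) {f : ι → ℝ}
    (hf : ∀ i ∈ s, 0 ≤ f i) {A B : ℝ} (hA : ∀ i ∈ s, f i ≤ A) (hB : ∀ i ∈ t, f i ≤ B) :
    ∏ i ∈ s, f i ≤ B ^ #t * A ^ (#s - #t) := by
  classical
  calc ∏ i ∈ s, f i = (∏ i ∈ s \ t, f i) * ∏ i ∈ t, f i := (prod_sdiff hts).symm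
    _ ≤ (∏ _i ∈ s \ t, A) * ∏ _i ∈ t, B := by
        gcongr with i hi j hj
        · exact prod_nonneg fun i hi ↦ hf i (hts hi)
        · exact prod_nonneg fun i hi ↦ (hf i (mem_sdiff.1 hi).1).trans (hA i (mem_sdiff.1 hi).1)
        · exact fun i hi ↦ hf i (mem_sdiff.1 hi).1
        · exact hA i (mem_sdiff.1 hi).1
        · exact fun i hi ↦ hf i (hts hi)
        · exact hB j hj
    _ = B ^ #t * A ^ (#s - #t) := by
        rw [prod_const, prod_const, card_sdiff_of_subset hts, mul_comm]

lemma pow_mul_pow_sub_le_rpow {A B : ℝ} (hB : 0 < B) (hBA : B ≤ A) {c n κ : ℕ} (hcn : c ≤ n)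
    (hnc : n ≤ κ * c) :
    B ^ c * A ^ (n - c) ≤ (A ^ (1 - 1 / (κ : ℝ)) * B ^ (1 / (κ : ℝ))) ^ n := by
  rcases Nat.eq_zero_or_pos κ with rfl | hκ
  · obtain rfl : n = 0 := by omega
    obtain rfl : c = 0 := by omega
    simp
  have hA : 0 < A := hB.trans_le hBA
  set e : ℝ := n / κ with he
  have hec : e ≤ c := by
    rw [div_le_iff₀ (by positivity)]
    exact_mod_cast (mul_comm c κ ▸ hnc)
  calc B ^ c * A ^ (n - c) = B ^ e * B ^ ((c : ℝ) - e) * A ^ ((n : ℝ) - c) := by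
        rw [← Real.rpow_add hB, add_sub_cancel, Real.rpow_natCast, ← Nat.cast_sub hcn,
          Real.rpow_natCast]
    _ ≤ B ^ e * A ^ ((c : ℝ) - e) * A ^ ((n : ℝ) - c) := by gcongr
    _ = (A ^ (1 - 1 / (κ : ℝ)) * B ^ (1 / (κ : ℝ))) ^ n := by
        rw [mul_assoc, ← Real.rpow_add hA, mul_pow, ← Real.rpow_mul_natCast hA.le,
          ← Real.rpow_mul_natCast hB.le, mul_comm]
        congr 2 <;> rw [he] <;> ring

lemma eventually_le_inv_pow_of_lt_liminf {r : ℕ → ℝ} {s : ℝ} (hs : 0 < s)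
    (h : ENNReal.ofReal s < liminf (fun n : ℕ => ENNReal.ofReal (r n) ^ (-(1 / (n : ℝ)))) atTop) :
    ∀ᶠ n in atTop, r n ≤ s⁻¹ ^ n := by
  filter_upwards [eventually_lt_of_lt_liminf h, eventually_ge_atTop 1] with n hn hn1
  have hn0 : (0 : ℝ) < n := by exact_mod_cast hn1
  rw [ENNReal.rpow_neg, ENNReal.lt_inv_iff_lt_inv] at hn
  have hlt : ENNReal.ofReal (r n) < ENNReal.ofReal (s⁻¹ ^ n) :=
    calc ENNReal.ofReal (r n) = (ENNReal.ofReal (r n) ^ (1 / (n : ℝ))) ^ (n : ℝ) := by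
          rw [← ENNReal.rpow_mul, one_div_mul_cancel hn0.ne', ENNReal.rpow_one]
      _ < (ENNReal.ofReal s)⁻¹ ^ (n : ℝ) := ENNReal.rpow_lt_rpow hn hn0
      _ = ENNReal.ofReal (s⁻¹ ^ n) := by
          rw [ENNReal.rpow_natCast, ENNReal.ofReal_pow (inv_nonneg.2 hs.le),
            ENNReal.ofReal_inv_of_pos hs]
  exact ((ENNReal.ofReal_lt_ofReal_iff (by positivity)).1 hlt).le

lemma summable_mul_of_lt_liminf {R : Type*} [NormedRing R] [CompleteSpace R] {u v : ℕ → R}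
    {L : ℝ} (hL : 0 ≤ L) (hv : ∀ n, ‖v n‖ ≤ L ^ n)
    (h : ENNReal.ofReal L < liminf (fun n : ℕ => ENNReal.ofReal ‖u n‖ ^ (-(1 / (n : ℝ)))) atTop) :
    Summable fun n ↦ u n * v n := by
  obtain ⟨t, hLt, ht⟩ := exists_between h
  have ht_top : t ≠ ⊤ := ht.ne_top
  have hLs : L < t.toReal := (ENNReal.ofReal_lt_iff_lt_toReal hL ht_top).1 hLt
  have hs : 0 < t.toReal := hL.trans_lt hLs
  have hu := eventually_le_inv_pow_of_lt_liminf hs (by rwa [ENNReal.ofReal_toReal ht_top])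
  refine .of_norm_bounded_eventually_nat
    (summable_geometric_of_lt_one (div_nonneg hL hs.le) ((div_lt_one hs).2 hLs)) ?_
  filter_upwards [hu] with n hn
  calc ‖u n * v n‖ ≤ ‖u n‖ * ‖v n‖ := norm_mul_le _ _
    _ ≤ t.toReal⁻¹ ^ n * L ^ n := mul_le_mul hn (hv n) (norm_nonneg _) (by positivity)
    _ = (L / t.toReal) ^ n := by rw [div_eq_mul_inv, mul_pow, mul_comm]

section Ultrametric

variable [IsUltrametricDist Kv]

lemma norm_geom_sum_le_one {y : Kv} (hy : ‖y‖ ≤ 1) (m : ℕ) : ‖∑ j ∈ range m, y ^ j‖ ≤ 1 :=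
  IsUltrametricDist.norm_sum_le_of_forall_le_of_nonneg zero_le_one fun j _ ↦ by
    rw [norm_pow]
    exact pow_le_one₀ (norm_nonneg y) hy

lemma norm_one_sub_le_one {y : Kv} (hy : ‖y‖ ≤ 1) : ‖1 - y‖ ≤ 1 := by
  rw [sub_eq_add_neg]
  refine (IsUltrametricDist.norm_add_le_max _ _).trans (max_le ?_ ?_) <;> simp [hy]

lemma norm_one_sub_pow_mul_le_norm_qNat {q : Kv} (hq : ‖q‖ ≤ 1) (κ m : ℕ) :
    ‖1 - q ^ (κ * m)‖ ≤ ‖qNat q κ‖ := by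
  have hq' : ‖q ^ κ‖ ≤ 1 := by rw [norm_pow]; exact pow_le_one₀ (norm_nonneg q) hq
  have key : 1 - q ^ (κ * m) = (∑ j ∈ range m, (q ^ κ) ^ j) * qNat q κ * (1 - q) := by
    rw [mul_assoc, qNat, geom_sum_mul_neg, geom_sum_mul_neg, pow_mul]
  rw [key, norm_mul, norm_mul]
  calc _ ≤ 1 * ‖qNat q κ‖ * 1 := by
        gcongr
        · exact norm_geom_sum_le_one hq' m
        · exact norm_one_sub_le_one hq
    _ = ‖qNat q κ‖ := by ring

lemma norm_sub_pow_mul_le (q x a : Kv) (i : ℕ) :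
    ‖x - q ^ i * a‖ ≤ max ‖x - a‖ (‖1 - q ^ i‖ * ‖a‖) := by
  rw [show x - q ^ i * a = (x - a) + (1 - q ^ i) * a by ring, ← norm_mul]
  exact IsUltrametricDist.norm_add_le_max _ _

theorem norm_prod_sub_pow_mul_le {q : Kv} (hq : ‖q‖ ≤ 1) {κ : ℕ} (hκ : 0 < κ) {x a : Kv} {ρ : ℝ}
    (hx : ‖x - a‖ < ρ) (n : ℕ) :
    ‖∏ i ∈ range n, (x - q ^ i * a)‖ ≤
      ((max ρ ‖a‖) ^ (1 - 1 / (κ : ℝ)) * (max ρ (‖a‖ * ‖qNat q κ‖)) ^ ((1 : ℝ) / (κ : ℝ))) ^ n := by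
  have hρ : 0 < ρ := (norm_nonneg _).trans_lt hx
  set S := (range (n ⌈/⌉ κ)).image (κ * ·)
  have hSn : S ⊆ range n := by
    simp only [S, subset_iff, mem_image, mem_range]
    rintro _ ⟨j, hj, rfl⟩
    exact not_le.1 fun h ↦ hj.not_ge ((ceilDiv_le_iff_le_mul hκ).2 h)
  have hcard : #S = n ⌈/⌉ κ :=
    (card_image_of_injective _ (mul_right_injective₀ hκ.ne')).trans (card_range _)
  rw [norm_prod]
  calc ∏ i ∈ range n, ‖x - q ^ i * a‖
      ≤ (max ρ (‖a‖ * ‖qNat q κ‖)) ^ #S * (max ρ ‖a‖) ^ (#(range n) - #S) := by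
        refine prod_le_pow_mul_pow_of_subset hSn (fun _ _ ↦ norm_nonneg _) (fun i _ ↦ ?_) ?_
        · refine (norm_sub_pow_mul_le q x a i).trans (max_le_max hx.le ?_)
          refine mul_le_of_le_one_left (norm_nonneg a) (norm_one_sub_le_one ?_)
          rw [norm_pow]
          exact pow_le_one₀ (norm_nonneg q) hq
        · simp only [S, mem_image]
          rintro _ ⟨j, -, rfl⟩
          refine (norm_sub_pow_mul_le q x a _).trans (max_le_max hx.le ?_)
          rw [mul_comm]
          gcongr
          exact norm_one_sub_pow_mul_le_norm_qNat hq κ j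
    _ ≤ _ := by
        rw [hcard, card_range]
        refine pow_mul_pow_sub_le_rpow (lt_max_of_lt_left hρ) (max_le_max le_rfl ?_) ?_ ?_
        · exact mul_le_of_le_one_right (norm_nonneg a) (norm_geom_sum_le_one hq κ)
        · simpa [hcard] using card_le_card hSn
        · simpa using le_smul_ceilDiv (b := n) hκ

end Ultrametric

theorem q_series_convergence_general
    {Kv : Type*} [NontriviallyNormedField Kv] [CompleteSpace Kv]
    (hna : ∀ x y : Kv, ‖x + y‖ ≤ max ‖x‖ ‖y‖)
    (q : Kv) (hq1 : ‖q‖ = 1)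
    (κ : ℕ) (hκpos : 0 < κ)
    (a : Kv) (aseq : ℕ → Kv) (ρ : ℝ)
    (hlt : ENNReal.ofReal
        ((max ρ ‖a‖) ^ (1 - 1 / (κ : ℝ)) * (max ρ (‖a‖ * ‖qNat q κ‖)) ^ ((1 : ℝ) / (κ : ℝ))) <
      Filter.liminf (fun n : ℕ => (ENNReal.ofReal ‖aseq n‖) ^ (-(1 / (n : ℝ)))) Filter.atTop) :
    ∀ x : Kv, ‖x - a‖ < ρ →
      Summable (fun n : ℕ => aseq n * ∏ i ∈ Finset.range n, (x - q ^ i * a)) := by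
  have := IsUltrametricDist.isUltrametricDist_of_forall_norm_add_le_max_norm hna
  intro x hx
  exact summable_mul_of_lt_liminf (by positivity) (norm_prod_sub_pow_mul_le hq1.le hκpos hx) hlt

/-- Convergence of q-expansions. -/
theorem q_series_convergence
    {Kv : Type*} [NontriviallyNormedField Kv] [CompleteSpace Kv]
    (hna : ∀ x y : Kv, ‖x + y‖ ≤ max ‖x‖ ‖y‖)
    (p : ℕ) (hp : Nat.Prime p) (hpv : ‖(p : Kv)‖ < 1)
    (q : Kv) (hq1 : ‖q‖ = 1) (hqru : ∀ m : ℕ, 0 < m → q ^ m ≠ 1)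
    (κ : ℕ) (hκpos : 0 < κ) (hκlt : ‖1 - q ^ κ‖ < 1)
    (hκmin : ∀ m : ℕ, 0 < m → ‖1 - q ^ m‖ < 1 → κ ≤ m)
    (hdw : ‖1 - q ^ κ‖ < ‖(p : Kv)‖ ^ ((1 : ℝ) / ((p : ℝ) - 1)))
    (a : Kv) (aseq : ℕ → Kv) (ρ : ℝ) (hρ0 : 0 < ρ) (hρ1 : ρ ≤ 1)
    (hlt : ENNReal.ofReal
        ((max ρ ‖a‖) ^ (1 - 1 / (κ : ℝ)) * (max ρ (‖a‖ * ‖qNat q κ‖)) ^ ((1 : ℝ) / (κ : ℝ))) <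
      Filter.liminf (fun n : ℕ => (ENNReal.ofReal ‖aseq n‖) ^ (-(1 / (n : ℝ)))) Filter.atTop) :
    ∀ x : Kv, ‖x - a‖ < ρ →
      Summable (fun n : ℕ => aseq n * ∏ i ∈ Finset.range n, (x - q ^ i * a)) :=
  q_series_convergence_general hna q hq1 κ hκpos a aseq ρ hlt
end
end
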